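/- Let V, U be real reflexive Banach spaces. Suppose ż = J(z)·δH/δz + R(z)·δS/δz + B(z)u in V*, with J(z) skew-adjoint, R(z) self-adjoint semi-elliptic, non-interaction conditions J(z)·δS/δz = 0 and R(z)·δH/δz = 0, and output ports y_H = B(z)*·δH/δz and y_S = B(z)*·δS/δz in U*. Then dH/dt = ⟨y_H, u⟩ and dS/dt ≥ ⟨y_S, u⟩, assuming the chain rules dH/dt = ⟨δH/δz, ż⟩ and dS/dt = ⟨δS/δz, ż⟩. -/
import Mathlib

/-- port balances for the open GENERIC system
ż = J δH/δz + R δS/δz + B u: dH/dt = ⟨y_H, u⟩ and dS/dt ≥ ⟨y_S, u⟩, where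
y_H = B* δH/δz and y_S = B* δS/δz. -/
theorem generic_open_port_balances
    (V U : Type*) [NormedAddCommGroup V] [NormedSpace ℝ V]
    [NormedAddCommGroup U] [NormedSpace ℝ U]
    (J R : ℝ → V →L[ℝ] (V →L[ℝ] ℝ))
    (Bop : ℝ → U →L[ℝ] (V →L[ℝ] ℝ))
    (u : ℝ → U)
    (zdot : ℝ → V →L[ℝ] ℝ) (dH dS : ℝ → V) (H S : ℝ → ℝ)
    (hevol : ∀ t, zdot t = J t (dH t) + R t (dS t) + Bop t (u t))
    (hskew : ∀ t (v w : V), J t w v = - J t v w)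
    (hself : ∀ t (v w : V), R t w v = R t v w)
    (hsemi : ∀ t (v : V), 0 ≤ R t v v)
    (hnonJ : ∀ t, J t (dS t) = 0)
    (hnonR : ∀ t, R t (dH t) = 0)
    (hchainH : ∀ t, HasDerivAt H ((zdot t) (dH t)) t)
    (hchainS : ∀ t, HasDerivAt S ((zdot t) (dS t)) t) :
    (∀ t, HasDerivAt H ((Bop t (u t)) (dH t)) t) ∧
    (∀ t, (Bop t (u t)) (dS t) ≤ deriv S t) := by
  constructor
  · intro t
    have h := hchainH t
    have : (zdot t) (dH t) = (Bop t (u t)) (dH t) := by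
      rw [hevol t]
      have h1 : J t (dH t) (dH t) = 0 := by
        have := hskew t (dH t) (dH t); linarith
      have h2 : R t (dS t) (dH t) = 0 := by
        rw [hself t (dH t) (dS t), hnonR t]; rfl
      simp [h1, h2]
    rwa [this] at h
  · intro t
    rw [(hchainS t).deriv, hevol t]
    have h1 : J t (dH t) (dS t) = 0 := by
      rw [hskew t (dS t) (dH t), hnonJ t]; simp
    have h2 : 0 ≤ R t (dS t) (dS t) := hsemi t (dS t)
    simp only [ContinuousLinearMap.add_apply, h1]
    linarith
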